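/- (Theorem 3.1, uniqueness.) Suppose E[V − τ] < 0 and P( sup_{j≥1} S_j ≤ 0 ) > 0. If X, X' : Ω → [0,∞) are measurable random variables each satisfying the stationary equation X ∘ θ = φ(X(·), ·) P-a.s. and X' ∘ θ = φ(X'(·), ·) P-a.s., then X = X' P-a.s. -/

import Mathlib

open MeasureTheory Filter

noncomputable section

variable {Ω : Type*}

/-- ψ(y, ω) = max( max( y + V ω, σ ω + D ω + V ω ) − τ ω, 0 ). -/
def psi (σ D V τ : Ω → ℝ) (y : ℝ) (ω : Ω) : ℝ :=
  max (max (y + V ω) (σ ω + D ω + V ω) - τ ω) 0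

/-- φ(x, ω): the one-step workload map, defined by its four cases:
x + σ − τ if x + σ − τ > 0 and x ≤ D; x − τ if x − τ > 0 and x > D;
max(x + σ + V − τ, 0) if x + σ − τ ≤ 0 and x ≤ D; 0 if x − τ ≤ 0 and x > D. -/
def phi (σ D V τ : Ω → ℝ) (x : ℝ) (ω : Ω) : ℝ :=
  if x ≤ D ω then
    if 0 < x + σ ω - τ ω then x + σ ω - τ ω else max (x + σ ω + V ω - τ ω) 0
  else
    if 0 < x - τ ω then x - τ ω else 0

/-- S_j(ω) = σ(θ^{-j}ω) + D(θ^{-j}ω) + Σ_{i=1}^{j} V(θ^{-i}ω) − Σ_{i=1}^{j} τ(θ^{-i}ω),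
where `θi` denotes the inverse of `θ`. -/
def Sj (θi : Ω → Ω) (σ D V τ : Ω → ℝ) (j : ℕ) (ω : Ω) : ℝ :=
  σ (θi^[j] ω) + D (θi^[j] ω)
    + ∑ i ∈ Finset.Icc 1 j, V (θi^[i] ω)
    - ∑ i ∈ Finset.Icc 1 j, τ (θi^[i] ω)

/-- M_∞ = max(0, sup_{j ≥ 1} S_j) ∈ [0,∞]. -/
def Minf (θi : Ω → Ω) (σ D V τ : Ω → ℝ) (ω : Ω) : EReal :=
  max 0 (⨆ j : ℕ, ((Sj θi σ D V τ (j + 1) ω : ℝ) : EReal))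

/-- The workload sequence Z_0^W = W, Z_{n+1}^W(ω) = φ(Z_n^W(ω), θⁿω). -/
def Zseq (θf : Ω → Ω) (σ D V τ : Ω → ℝ) (W : Ω → ℝ) : ℕ → Ω → ℝ
  | 0 => W
  | n + 1 => fun ω => phi σ D V τ (Zseq θf σ D V τ W n ω) (θf^[n] ω)

/-- The majorizing sequence Y_0^Y = Y, Y_{n+1}^Y(ω) = ψ(Y_n^Y(ω), θⁿω). -/
def Yseq (θf : Ω → Ω) (σ D V τ : Ω → ℝ) (Y : Ω → ℝ) : ℕ → Ω → ℝ
  | 0 => Y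
  | n + 1 => fun ω => psi σ D V τ (Yseq θf σ D V τ Y n ω) (θf^[n] ω)

/-!
Write `T = θ⁻¹` and `f = V - τ`. Since `φ(x, ·) ≤ ψ(x, ·)`, unrolling the stationary equation `n`
steps into the past gives, on the event `B = {sup_j S_j ≤ 0}`,
`X ≤ max (0, X ∘ Tⁿ + ∑_{i=1}^n f ∘ Tⁱ)`. The sums tend to `-∞` almost surely (maximal ergodic
theorem and `E f < 0`), while by recurrence `X ∘ Tⁿ` returns infinitely often below a fixed level,
so every stationary solution, being a value of `φ ≥ 0`, vanishes almost surely on `B`. Two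
solutions therefore agree on a set of positive probability; since they obey the same recursion
this set is `θ`-invariant modulo null sets, hence of full measure by ergodicity.
-/

open Function Set

section MaximalErgodic

def birkhoffMax (T : Ω → Ω) (f : Ω → ℝ) : ℕ → Ω → ℝ
  | 0 => 0
  | n + 1 => fun ω => max 0 (f ω + birkhoffMax T f n (T ω))

variable {T : Ω → Ω} {f : Ω → ℝ}

theorem birkhoffMax_nonneg (n : ℕ) (ω : Ω) : 0 ≤ birkhoffMax T f n ω := by
  cases n <;> simp [birkhoffMax]

theorem birkhoffSum_le_birkhoffMax {k n : ℕ} (hkn : k ≤ n) (ω : Ω) :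
    birkhoffSum T f k ω ≤ birkhoffMax T f n ω := by
  induction n generalizing k ω with
  | zero => simp [Nat.le_zero.1 hkn, birkhoffMax]
  | succ n ih =>
    rcases k with _ | k
    · simpa using birkhoffMax_nonneg (n + 1) ω
    · rw [birkhoffSum_succ']
      exact le_max_of_le_right (add_le_add_right (ih (k := k) (by omega) (T ω)) _)

theorem exists_birkhoffMax_eq (n : ℕ) (ω : Ω) :
    ∃ k ≤ n, birkhoffMax T f n ω = birkhoffSum T f k ω := by
  induction n generalizing ω with
  | zero => exact ⟨0, le_rfl, by simp [birkhoffMax]⟩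
  | succ n ih =>
    obtain ⟨k, hkn, hk⟩ := ih (T ω)
    rcases le_total (f ω + birkhoffMax T f n (T ω)) 0 with h | h
    · exact ⟨0, by omega, by simp [birkhoffMax, h]⟩
    · rw [hk] at h
      exact ⟨k + 1, by omega, by simp only [birkhoffMax, hk, max_eq_right h, birkhoffSum_succ']⟩

theorem birkhoffMax_mono (ω : Ω) : Monotone (birkhoffMax T f · ω) :=
  monotone_nat_of_le_succ fun n => by
    obtain ⟨k, hkn, hk⟩ := exists_birkhoffMax_eq (T := T) (f := f) n ω
    simpa only [hk] using birkhoffSum_le_birkhoffMax (n := n + 1) (by omega) ω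

theorem birkhoffMax_le_add_comp {n : ℕ} {ω : Ω} (h : 0 < birkhoffMax T f n ω) :
    birkhoffMax T f n ω ≤ f ω + birkhoffMax T f n (T ω) := by
  have := birkhoffMax_mono (T := T) (f := f) ω n.le_succ
  exact (le_max_iff.1 this).resolve_left h.not_ge

theorem iUnion_birkhoffMax_pos :
    ⋃ n, {ω | 0 < birkhoffMax T f n ω} = {ω | ∃ k, 0 < birkhoffSum T f k ω} := by
  ext ω
  simp only [mem_iUnion, mem_ofPred_eq]
  constructor
  · rintro ⟨n, hn⟩
    obtain ⟨k, -, hk⟩ := exists_birkhoffMax_eq n ω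
    exact ⟨k, hk ▸ hn⟩
  · rintro ⟨k, hk⟩
    exact ⟨k, hk.trans_le (birkhoffSum_le_birkhoffMax le_rfl ω)⟩

variable [MeasurableSpace Ω] {μ : Measure Ω}

theorem measurable_birkhoffSum (hT : Measurable T) (hf : Measurable f) (n : ℕ) :
    Measurable (birkhoffSum T f n) :=
  Finset.measurable_sum _ fun i _ => hf.comp (hT.iterate i)

theorem measurable_birkhoffMax (hT : Measurable T) (hf : Measurable f) (n : ℕ) :
    Measurable (birkhoffMax T f n) := by
  induction n with
  | zero => exact measurable_const
  | succ n ih => exact measurable_const.max (hf.add (ih.comp hT))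

theorem integrable_birkhoffMax (hT : MeasurePreserving T μ μ) (hf : Integrable f μ) (n : ℕ) :
    Integrable (birkhoffMax T f n) μ := by
  induction n with
  | zero => exact integrable_zero Ω ℝ μ
  | succ n ih => exact (integrable_zero Ω ℝ μ).sup (hf.add (hT.integrable_comp_of_integrable ih))

theorem setIntegral_birkhoffMax_pos_nonneg [IsFiniteMeasure μ] (hT : MeasurePreserving T μ μ)
    (hfm : Measurable f) (hf : Integrable f μ) (n : ℕ) :
    0 ≤ ∫ ω in {ω | 0 < birkhoffMax T f n ω}, f ω ∂μ := by
  set M := birkhoffMax T f n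
  set A := {ω | 0 < M ω}
  have hMm : Measurable M := measurable_birkhoffMax hT.measurable hfm n
  have hM : Integrable M μ := integrable_birkhoffMax hT hf n
  have hMT : Integrable (M ∘ T) μ := hT.integrable_comp_of_integrable hM
  have hA : MeasurableSet A := measurableSet_lt measurable_const hMm
  have hMA : ∫ ω in A, M ω ∂μ = ∫ ω, M ω ∂μ :=
    setIntegral_eq_integral_of_forall_compl_eq_zero fun ω hω =>
      le_antisymm (not_lt.1 hω) (birkhoffMax_nonneg n ω)
  have hMTA : ∫ ω in A, M (T ω) ∂μ ≤ ∫ ω, M (T ω) ∂μ :=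
    setIntegral_le_integral hMT (.of_forall fun ω => birkhoffMax_nonneg n (T ω))
  have hMT_eq : ∫ ω, M (T ω) ∂μ = ∫ ω, M ω ∂μ := by
    rw [← integral_map hT.measurable.aemeasurable hMm.aestronglyMeasurable, hT.map_eq]
  calc (0 : ℝ) ≤ ∫ ω in A, M ω ∂μ - ∫ ω in A, M (T ω) ∂μ := by linarith
    _ = ∫ ω in A, (M ω - M (T ω)) ∂μ := (integral_sub hM.integrableOn hMT.integrableOn).symm
    _ ≤ ∫ ω in A, f ω ∂μ := setIntegral_mono_on (hM.sub hMT).integrableOn hf.integrableOn hA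
        fun ω hω => by linarith [birkhoffMax_le_add_comp (T := T) (f := f) hω]

theorem setIntegral_exists_birkhoffSum_pos_nonneg [IsFiniteMeasure μ]
    (hT : MeasurePreserving T μ μ) (hfm : Measurable f) (hf : Integrable f μ) :
    0 ≤ ∫ ω in {ω | ∃ k, 0 < birkhoffSum T f k ω}, f ω ∂μ := by
  have hmono : Monotone fun n => {ω | 0 < birkhoffMax T f n ω} :=
    fun _ _ hmn _ hω => hω.trans_le (birkhoffMax_mono _ hmn)
  have := tendsto_setIntegral_of_monotone
    (fun n => measurableSet_lt measurable_const (measurable_birkhoffMax hT.measurable hfm n))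
    hmono hf.integrableOn
  rw [iUnion_birkhoffMax_pos] at this
  exact ge_of_tendsto' this fun n => setIntegral_birkhoffMax_pos_nonneg hT hfm hf n

theorem measure_forall_birkhoffSum_nonpos_ne_zero [IsFiniteMeasure μ]
    (hT : MeasurePreserving T μ μ) (hfm : Measurable f) (hf : Integrable f μ)
    (hneg : ∫ ω, f ω ∂μ < 0) : μ {ω | ∀ k, birkhoffSum T f k ω ≤ 0} ≠ 0 := by
  intro h
  have hfull : {ω | ∃ k, 0 < birkhoffSum T f k ω} =ᵐ[μ] (univ : Set Ω) := by
    rw [ae_eq_univ]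
    simpa only [compl_ofPred, not_exists, not_lt] using h
  have := setIntegral_exists_birkhoffSum_pos_nonneg hT hfm hf
  rw [setIntegral_congr_set hfull, setIntegral_univ] at this
  linarith

end MaximalErgodic

section Ergodic

variable [MeasurableSpace Ω] {μ : Measure Ω} [IsFiniteMeasure μ] {T : Ω → Ω}

theorem Ergodic.ae_frequently_iterate_mem (hT : Ergodic T μ) {s : Set Ω} (hs : MeasurableSet s)
    (h0 : μ s ≠ 0) : ∀ᵐ ω ∂μ, ∃ᶠ n in atTop, T^[n] ω ∈ s := by
  set I := limsup (fun n => T^[n] ⁻¹' s) atTop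
  have hI : ∀ ω, ω ∈ I ↔ ∃ᶠ n in atTop, T^[n] ω ∈ s := fun _ => mem_limsup_iff_frequently_mem
  have hIm : MeasurableSet I :=
    MeasurableSet.measurableSet_limsup fun n => hT.measurable.iterate n hs
  have hinv : T ⁻¹' I = I := by
    ext ω
    simp only [mem_preimage, hI, ← iterate_succ_apply]
    exact (frequently_map (m := (· + 1)) (P := fun n => T^[n] ω ∈ s)).symm.trans
      (by rw [map_add_atTop_eq_nat])
  have hsI : s ≤ᵐ[μ] I :=
    (hT.toMeasurePreserving.conservative.ae_mem_imp_frequently_image_mem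
      hs.nullMeasurableSet).mono fun ω hω hωs => (hI ω).2 (hω hωs)
  rcases hT.ae_empty_or_univ hIm hinv with hnull | hfull
  · exact absurd (measure_mono_null_ae hsI (by simpa using measure_congr hnull)) h0
  · exact (eventuallyEq_set.1 hfull).mono fun ω hω => (hI ω).1 (hω.2 trivial)

theorem Ergodic.ae_tendsto_birkhoffSum_atBot [IsProbabilityMeasure μ] (hT : Ergodic T μ)
    {f : Ω → ℝ} (hfm : Measurable f) (hf : Integrable f μ) (hneg : ∫ ω, f ω ∂μ < 0) :
    ∀ᵐ ω ∂μ, Tendsto (birkhoffSum T f · ω) atTop atBot := by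
  -- Once the orbit enters the set where all Birkhoff sums of `f + ε` are nonpositive, the sums
  -- of `f` decrease at rate at least `ε`; that set has positive measure by the maximal inequality.
  obtain ⟨ε, hε, hfε⟩ : ∃ ε > 0, ∫ ω, f ω ∂μ + ε < 0 :=
    ⟨-(∫ ω, f ω ∂μ) / 2, by linarith, by linarith⟩
  set g := fun ω => f ω + ε
  have hgm : Measurable g := hfm.add measurable_const
  have hg : ∫ ω, g ω ∂μ < 0 := by
    simpa only [g, integral_add hf (integrable_const ε), integral_const, probReal_univ, one_smul]
  have hgsum : ∀ k ω, birkhoffSum T g k ω = birkhoffSum T f k ω + k * ε := fun k ω => by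
    simp [g, birkhoffSum, Finset.sum_add_distrib]
  set A := {ω | ∀ k, birkhoffSum T g k ω ≤ 0}
  have hAm : MeasurableSet A := by
    simp only [A, ofPred_forall]
    exact .iInter fun k =>
      measurableSet_le (measurable_birkhoffSum hT.measurable hgm k) measurable_const
  have hA := measure_forall_birkhoffSum_nonpos_ne_zero hT.toMeasurePreserving hgm
    (hf.add (integrable_const ε)) hg
  filter_upwards [hT.ae_frequently_iterate_mem hAm hA] with ω hω
  obtain ⟨m, hm⟩ := hω.exists
  have hbound : ∀ k, birkhoffSum T f (k + m) ω ≤ birkhoffSum T f m ω + k * (-ε) := fun k => by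
    have := hm k
    rw [hgsum] at this
    rw [add_comm, birkhoffSum_add]
    linarith
  rw [← tendsto_add_atTop_iff_nat m]
  exact tendsto_atBot_mono hbound <| tendsto_atBot_add_const_left _ _ <|
    tendsto_natCast_atTop_atTop.atTop_mul_const_of_neg (neg_neg_of_pos hε)


theorem Ergodic.ae_eq_of_measure_setOf_eq_ne_zero (hT : Ergodic T μ) {F : ℝ → Ω → ℝ} {X Y : Ω → ℝ}
    (hXm : Measurable X) (hYm : Measurable Y) (hX : ∀ᵐ ω ∂μ, X (T ω) = F (X ω) ω)
    (hY : ∀ᵐ ω ∂μ, Y (T ω) = F (Y ω) ω) (h : μ {ω | X ω = Y ω} ≠ 0) : X =ᵐ[μ] Y := by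
  have hinv : {ω | X ω = Y ω} ≤ᵐ[μ] T ⁻¹' {ω | X ω = Y ω} := by
    filter_upwards [hX, hY] with ω hXω hYω (hω : X ω = Y ω)
    show X (T ω) = Y (T ω)
    rw [hXω, hYω, hω]
  rcases hT.ae_empty_or_univ_of_ae_le_preimage (measurableSet_eq_fun hXm hYm).nullMeasurableSet
    hinv with hnull | hfull
  · exact absurd (by simpa using measure_congr hnull) h
  · exact (eventuallyEq_set.1 hfull).mono fun ω hω => hω.2 trivial

end Ergodic

theorem ae_forall_iterate_symm [MeasurableSpace Ω] {P : Measure Ω} {θ : Ω ≃ᵐ Ω}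
    (hθ : MeasurePreserving θ P P) {F : ℝ → Ω → ℝ} {X : Ω → ℝ}
    (hX : ∀ᵐ ω ∂P, X (θ ω) = F (X ω) ω) :
    ∀ᵐ ω ∂P, ∀ k, X (θ.symm^[k] ω) = F (X (θ.symm^[k + 1] ω)) (θ.symm^[k + 1] ω) :=
  ae_all_iff.2 fun k => (((hθ.symm θ).iterate (k + 1)).quasiMeasurePreserving.ae hX).mono
    fun ω hω => by
      rwa [iterate_succ_apply' θ.symm k ω, MeasurableEquiv.apply_symm_apply,
        ← iterate_succ_apply' θ.symm k ω] at hω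

theorem le_max_zero_add_sum_of_le_max (x u f : ℕ → ℝ) (hu : ∀ k, 0 ≤ u k)
    (hx : ∀ k, x k ≤ max (max (x (k + 1)) (u k) + f k) 0)
    (hS : ∀ k, u k + ∑ i ∈ Finset.range (k + 1), f i ≤ 0) (n : ℕ) :
    x 0 ≤ max 0 (x n + ∑ i ∈ Finset.range n, f i) := by
  have hG : ∀ k, ∑ i ∈ Finset.range k, f i ≤ 0 := fun k => by
    rcases k with _ | k
    · simp
    · linarith [hu k, hS k]
  induction n with
  | zero => simp
  | succ n ih =>
    have hxn := hx n
    have hSn := hS n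
    have hGn := hG n
    rw [Finset.sum_range_succ] at hSn ⊢
    refine ih.trans (max_le (le_max_left _ _) ?_)
    grind

section Workload

variable {σ D V τ : Ω → ℝ}

theorem phi_nonneg (x : ℝ) (ω : Ω) : 0 ≤ phi σ D V τ x ω := by
  unfold phi
  split_ifs <;> first | exact le_max_right _ _ | exact le_rfl | linarith

theorem phi_le_psi {ω : Ω} (hV : 0 ≤ V ω) (x : ℝ) : phi σ D V τ x ω ≤ psi σ D V τ x ω := by
  have h₁ := le_max_left (x + V ω) (σ ω + D ω + V ω)
  have h₂ := le_max_right (x + V ω) (σ ω + D ω + V ω)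
  unfold phi psi
  split_ifs <;> first
    | exact le_max_right _ _
    | exact le_max_of_le_left (by linarith)
    | exact max_le_max_right 0 (by linarith)

theorem psi_eq (y : ℝ) (ω : Ω) :
    psi σ D V τ y ω = max (max y (σ ω + D ω) + (V ω - τ ω)) 0 := by
  rw [psi, ← add_sub_assoc, max_add_add_right]

theorem Sj_eq_add_birkhoffSum (T : Ω → Ω) (j : ℕ) (ω : Ω) :
    Sj T σ D V τ j ω
      = σ (T^[j] ω) + D (T^[j] ω) + birkhoffSum T (fun ω => V ω - τ ω) j (T ω) := by
  have hshift : ∑ i ∈ Finset.Icc 1 j, (V (T^[i] ω) - τ (T^[i] ω))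
      = ∑ i ∈ Finset.range j, (V (T^[i + 1] ω) - τ (T^[i + 1] ω)) := by
    rw [Finset.range_eq_Ico, Finset.sum_Ico_add' (fun i => V (T^[i] ω) - τ (T^[i] ω)),
      ← Finset.Ico_add_one_right_eq_Icc]
  rw [Sj, add_sub_assoc, ← Finset.sum_sub_distrib, hshift]
  simp only [birkhoffSum, iterate_succ_apply]

theorem le_max_zero_add_birkhoffSum {T : Ω → Ω} (hσ0 : ∀ ω, 0 ≤ σ ω) (hD0 : ∀ ω, 0 ≤ D ω)
    (hV0 : ∀ ω, 0 ≤ V ω) {X : Ω → ℝ} {ω : Ω}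
    (hsol : ∀ k, X (T^[k] ω) = phi σ D V τ (X (T^[k + 1] ω)) (T^[k + 1] ω))
    (hS : ∀ j, Sj T σ D V τ (j + 1) ω ≤ 0) (n : ℕ) :
    X ω ≤ max 0 (X (T^[n] ω) + birkhoffSum T (fun ω => V ω - τ ω) n (T ω)) := by
  refine le_max_zero_add_sum_of_le_max (fun k => X (T^[k] ω))
    (fun k => σ (T^[k] (T ω)) + D (T^[k] (T ω))) (fun k => V (T^[k] (T ω)) - τ (T^[k] (T ω)))
    (fun k => add_nonneg (hσ0 _) (hD0 _)) (fun k => ?_) (fun k => ?_) n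
  · rw [hsol k, ← psi_eq, iterate_succ_apply]
    exact phi_le_psi (hV0 _) _
  · simpa only [Sj_eq_add_birkhoffSum, birkhoffSum, iterate_succ_apply, add_assoc] using hS k

theorem ae_eq_zero_of_forall_Sj_nonpos [MeasurableSpace Ω] {P : Measure Ω}
    [IsProbabilityMeasure P] {T : Ω → Ω} (hT : Ergodic T P)
    (hσ0 : ∀ ω, 0 ≤ σ ω) (hD0 : ∀ ω, 0 ≤ D ω) (hV0 : ∀ ω, 0 ≤ V ω)
    (hVm : Measurable V) (hτm : Measurable τ) (hVi : Integrable V P) (hτi : Integrable τ P)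
    (hEV : ∫ ω, (V ω - τ ω) ∂P < 0) {X : Ω → ℝ} (hXm : Measurable X)
    (hsol : ∀ᵐ ω ∂P, ∀ k, X (T^[k] ω) = phi σ D V τ (X (T^[k + 1] ω)) (T^[k + 1] ω)) :
    ∀ᵐ ω ∂P, (∀ j, Sj T σ D V τ (j + 1) ω ≤ 0) → X ω = 0 := by
  have hlevels : ⋃ c : ℕ, {ω | X ω ≤ c} = univ :=
    iUnion_eq_univ_iff.2 fun ω => exists_nat_ge (X ω)
  obtain ⟨c, hc⟩ : ∃ c : ℕ, 0 < P {ω | X ω ≤ c} :=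
    exists_measure_pos_of_not_measure_iUnion_null (by simp [hlevels])
  have hdiv := hT.ae_tendsto_birkhoffSum_atBot (f := fun ω => V ω - τ ω) (hVm.sub hτm)
    (hVi.sub hτi) hEV
  filter_upwards [hT.ae_frequently_iterate_mem (measurableSet_le hXm measurable_const) hc.ne',
    hT.toMeasurePreserving.quasiMeasurePreserving.ae hdiv, hsol] with ω hlow hdivω hsolω hS
  obtain ⟨n, hXn, hsum⟩ := (hlow.and_eventually (tendsto_atBot.1 hdivω (-c))).exists
  refine le_antisymm ?_ (hsolω 0 ▸ phi_nonneg _ _)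
  calc X ω ≤ max 0 (X (T^[n] ω) + birkhoffSum T (fun ω => V ω - τ ω) n (T ω)) :=
        le_max_zero_add_birkhoffSum hσ0 hD0 hV0 hsolω hS n
    _ ≤ 0 := max_le le_rfl (by linarith [show X (T^[n] ω) ≤ c from hXn])

end Workload

theorem stationary_uniqueness_general
    [MeasurableSpace Ω] (P : Measure Ω) [IsProbabilityMeasure P]
    (θ : Ω ≃ᵐ Ω) (herg : Ergodic (⇑θ) P)
    (σ D V τ : Ω → ℝ)
    (hVm : Measurable V) (hτm : Measurable τ)
    (hσ0 : ∀ ω, 0 ≤ σ ω) (hD0 : ∀ ω, 0 ≤ D ω) (hV0 : ∀ ω, 0 ≤ V ω)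
    (hVi : Integrable V P) (hτi : Integrable τ P)
    (hEV : ∫ ω, (V ω - τ ω) ∂P < 0)
    (hsup : 0 < P {ω : Ω | ∀ j : ℕ, Sj (⇑θ.symm) σ D V τ (j + 1) ω ≤ 0})
    (X Xp : Ω → ℝ) (hXm : Measurable X) (hXpm : Measurable Xp)
    (hXsol : ∀ᵐ ω ∂P, X (θ ω) = phi σ D V τ (X ω) ω)
    (hXpsol : ∀ᵐ ω ∂P, Xp (θ ω) = phi σ D V τ (Xp ω) ω) :
    X =ᵐ[P] Xp := by
  have hzero : ∀ {Y : Ω → ℝ}, Measurable Y → (∀ᵐ ω ∂P, Y (θ ω) = phi σ D V τ (Y ω) ω) →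
      ∀ᵐ ω ∂P, (∀ j, Sj (⇑θ.symm) σ D V τ (j + 1) ω ≤ 0) → Y ω = 0 := fun hYm hYsol =>
    ae_eq_zero_of_forall_Sj_nonpos herg.symm hσ0 hD0 hV0 hVm hτm hVi hτi hEV hYm
      (ae_forall_iterate_symm herg.toMeasurePreserving hYsol)
  refine herg.ae_eq_of_measure_setOf_eq_ne_zero hXm hXpm hXsol hXpsol (hsup.trans_le ?_).ne'
  refine measure_mono_ae ?_
  filter_upwards [hzero hXm hXsol, hzero hXpm hXpsol] with ω hX hXp hS
  exact (hX hS).trans (hXp hS).symm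

/-- Theorem 3.1, uniqueness: under E[V − τ] < 0 and
P(sup_{j≥1} S_j ≤ 0) > 0, any two stationary solutions of X ∘ θ = φ(X, ·) coincide a.s. -/
theorem stationary_uniqueness
    [MeasurableSpace Ω] (P : Measure Ω) [IsProbabilityMeasure P]
    (θ : Ω ≃ᵐ Ω) (herg : Ergodic (⇑θ) P)
    (σ D V τ : Ω → ℝ)
    (hσm : Measurable σ) (hDm : Measurable D) (hVm : Measurable V) (hτm : Measurable τ)
    (hσ0 : ∀ ω, 0 ≤ σ ω) (hD0 : ∀ ω, 0 ≤ D ω) (hV0 : ∀ ω, 0 ≤ V ω) (hτ0 : ∀ ω, 0 ≤ τ ω)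
    (hσi : Integrable σ P) (hDi : Integrable D P) (hVi : Integrable V P) (hτi : Integrable τ P)
    (hτpos : ∀ᵐ ω ∂P, 0 < τ ω)
    (hEV : ∫ ω, (V ω - τ ω) ∂P < 0)
    (hsup : 0 < P {ω : Ω | ∀ j : ℕ, Sj (⇑θ.symm) σ D V τ (j + 1) ω ≤ 0})
    (X Xp : Ω → ℝ) (hXm : Measurable X) (hXpm : Measurable Xp)
    (hX0 : ∀ ω, 0 ≤ X ω) (hXp0 : ∀ ω, 0 ≤ Xp ω)
    (hXsol : ∀ᵐ ω ∂P, X (θ ω) = phi σ D V τ (X ω) ω)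
    (hXpsol : ∀ᵐ ω ∂P, Xp (θ ω) = phi σ D V τ (Xp ω) ω) :
    X =ᵐ[P] Xp :=
  stationary_uniqueness_general P θ herg σ D V τ hVm hτm hσ0 hD0 hV0 hVi hτi hEV hsup X Xp hXm hXpm
    hXsol hXpsol
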